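/- arXiv:1310.6505 — 5 statements merged into one kernel-verified Lean document; each statement's English description precedes it below -/
import Mathlib

section
/- Let 0 < ρ < 1 and let I ⊂ ℝ be a compact interval. There exists a constant c depending only on k and ρ such that for every polynomial Q of degree less than k and every measurable subset A ⊆ I with |A| ≥ ρ|I|, we have sup_{t ∈ I} |Q(t)| ≤ c · sup_{t ∈ A} |Q(t)|. -/
/-!
Interpolate `Q` at `k` points of `A` that are pairwise at least `δ = ρ|I|/(2k)` apart: each Lagrange
basis polynomial is a product of `k - 1` factors `(t - v_j)/(v_i - v_j)`, each bounded by
`|I|/δ = 2k/ρ` on `I`. Such points exist because removing the `δ`-ball around a chosen point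
costs `A` at most `2δ` of its measure, and `(k - 1)·2δ < ρ|I| ≤ |A|`.
-/

open MeasureTheory Set

open scoped ENNReal

theorem exists_pairwise_dist_ge_of_measure_ball_le {X : Type*} [PseudoMetricSpace X]
    [MeasurableSpace X] (μ : Measure X) {δ : ℝ} {m : ℝ≥0∞} (hball : ∀ x, μ (Metric.ball x δ) ≤ m)
    (n : ℕ) {A : Set X} (hA : n * m < μ A) :
    ∃ v : Fin (n + 1) → X, (∀ i, v i ∈ A) ∧ Pairwise fun i j => δ ≤ dist (v i) (v j) := by
  induction n generalizing A with
  | zero =>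
    obtain ⟨x, hx⟩ := nonempty_of_measure_ne_zero (pos_of_gt hA).ne'
    exact ⟨fun _ => x, fun _ => hx, fun i j hij => (hij (Subsingleton.elim (α := Fin 1) i j)).elim⟩
  | succ n ih =>
    obtain ⟨x, hx⟩ := nonempty_of_measure_ne_zero (pos_of_gt hA).ne'
    have hrest : n * m < μ (A \ Metric.ball x δ) := by
      refine lt_of_add_lt_add_right (a := m) ?_
      calc n * m + m = (n + 1 : ℕ) * m := by push_cast; ring
        _ < μ A := hA
        _ ≤ μ (A ∩ Metric.ball x δ) + μ (A \ Metric.ball x δ) := measure_le_inter_add_sdiff μ _ _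
        _ ≤ m + μ (A \ Metric.ball x δ) := by
          gcongr; exact (measure_mono inter_subset_right).trans (hball x)
        _ = _ := add_comm _ _
    obtain ⟨w, hwA, hw⟩ := ih hrest
    have hfar : ∀ i, δ ≤ dist x (w i) := fun i => by
      simpa [dist_comm] using (hwA i).2
    refine ⟨Fin.cons x w, Fin.cases hx fun i => (hwA i).1, ?_⟩
    intro i j hij
    cases i using Fin.cases <;> cases j using Fin.cases
    · exact absurd rfl hij
    · exact hfar _
    · simpa [dist_comm] using hfar _
    · exact hw (ne_of_apply_ne Fin.succ hij)

theorem exists_pairwise_abs_sub_ge_of_volume {δ : ℝ} (n : ℕ) {A : Set ℝ}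
    (hA : ENNReal.ofReal (2 * n * δ) < volume A) :
    ∃ v : Fin (n + 1) → ℝ, (∀ i, v i ∈ A) ∧ Pairwise fun i j => δ ≤ |v i - v j| := by
  rw [mul_comm 2, mul_assoc, ENNReal.ofReal_mul n.cast_nonneg, ENNReal.ofReal_natCast] at hA
  simpa only [Real.dist_eq] using
    exists_pairwise_dist_ge_of_measure_ball_le volume (fun x => (Real.volume_ball x δ).le) n hA

theorem abs_eval_basis_le {ι : Type*} [DecidableEq ι] {s : Finset ι} {v : ι → ℝ} {i : ι}
    (hi : i ∈ s) {δ D t : ℝ} (hδ : 0 < δ) (hsep : ∀ j ∈ s, j ≠ i → δ ≤ |v i - v j|)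
    (hD : ∀ j ∈ s, |t - v j| ≤ D) :
    |(Lagrange.basis s v i).eval t| ≤ (D / δ) ^ (s.card - 1) := by
  have hD0 : 0 ≤ D := (abs_nonneg _).trans (hD i hi)
  rw [Lagrange.basis, Polynomial.eval_prod, Finset.abs_prod, ← Finset.card_erase_of_mem hi,
    ← Finset.prod_const]
  refine Finset.prod_le_prod (fun _ _ => abs_nonneg _) fun j hj => ?_
  obtain ⟨hji, hjs⟩ := Finset.mem_erase.mp hj
  simp only [Lagrange.basisDivisor, Polynomial.eval_mul, Polynomial.eval_C, Polynomial.eval_sub,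
    Polynomial.eval_X, inv_mul_eq_div, abs_div]
  exact div_le_div₀ hD0 (hD j hjs) hδ (hsep j hjs hji)

theorem abs_eval_le_of_separated {ι : Type*} [DecidableEq ι] {s : Finset ι} {v : ι → ℝ}
    {Q : Polynomial ℝ} (hQ : Q.degree < s.card) {δ D S t : ℝ} (hδ : 0 < δ)
    (hsep : ∀ i ∈ s, ∀ j ∈ s, i ≠ j → δ ≤ |v i - v j|) (hD : ∀ j ∈ s, |t - v j| ≤ D)
    (hS : ∀ i ∈ s, |Q.eval (v i)| ≤ S) :
    |Q.eval t| ≤ s.card * (D / δ) ^ (s.card - 1) * S := by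
  have hinj : InjOn v s := fun i hi j hj hvij => by
    by_contra hij
    have := hsep i hi j hj hij
    rw [hvij, sub_self, abs_zero] at this
    exact this.not_gt hδ
  rw [Lagrange.eq_interpolate hinj hQ, Lagrange.interpolate_apply, Polynomial.eval_finsetSum]
  calc _ ≤ ∑ i ∈ s, |(Polynomial.C (Q.eval (v i)) * Lagrange.basis s v i).eval t| :=
        Finset.abs_sum_le_sum_abs _ _
    _ ≤ ∑ _i ∈ s, S * (D / δ) ^ (s.card - 1) := Finset.sum_le_sum fun i hi => by
        rw [Polynomial.eval_mul, Polynomial.eval_C, abs_mul]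
        refine mul_le_mul (hS i hi) ?_ (abs_nonneg _) ((abs_nonneg _).trans (hS i hi))
        exact abs_eval_basis_le hi hδ (fun j hj hji => hsep i hi j hj hji.symm) hD
    _ = _ := by rw [Finset.sum_const, nsmul_eq_mul]; ring

theorem remez_type_inequality_general (k : ℕ) (hk : 0 < k) (ρ : ℝ) (hρ0 : 0 < ρ) :
    ∃ c : ℝ, 0 < c ∧
      ∀ a b : ℝ, a < b → ∀ Q : Polynomial ℝ, Q.natDegree < k →
        ∀ A : Set ℝ, A ⊆ Set.Icc a b → MeasurableSet A →
          ρ * (b - a) ≤ (volume A).toReal →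
            ∀ t ∈ Set.Icc a b, |Q.eval t| ≤ c * sSup ((fun s => |Q.eval s|) '' A) := by
  obtain ⟨n, rfl⟩ : ∃ n, k = n + 1 := ⟨k - 1, by omega⟩
  refine ⟨(n + 1) * (2 * (n + 1) / ρ) ^ n, by positivity, ?_⟩
  intro a b hab Q hQ A hAI _ hA t ht
  set δ := ρ * (b - a) / (2 * (n + 1)) with hδ_def
  have hδ : 0 < δ := div_pos (mul_pos hρ0 (sub_pos.2 hab)) (by positivity)
  have hvol : ENNReal.ofReal (2 * n * δ) < volume A := by
    rw [ENNReal.ofReal_lt_iff_lt_toReal (by positivity)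
      (measure_mono hAI |>.trans_lt measure_Icc_lt_top).ne]
    refine lt_of_lt_of_le ?_ hA
    rw [hδ_def]
    field_simp
    nlinarith [mul_pos hρ0 (sub_pos.2 hab)]
  obtain ⟨v, hvA, hv⟩ := exists_pairwise_abs_sub_ge_of_volume n hvol
  have hbdd : BddAbove ((fun s => |Q.eval s|) '' A) :=
    (isCompact_Icc.image_of_continuousOn Q.continuous.abs.continuousOn).bddAbove.mono
      (image_mono hAI)
  have hdeg : Q.degree < (Finset.univ : Finset (Fin (n + 1))).card := by
    rw [Finset.card_univ, Fintype.card_fin]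
    exact Polynomial.degree_le_natDegree.trans_lt (by exact_mod_cast hQ)
  have key := abs_eval_le_of_separated (v := v) (t := t) (D := b - a) hdeg
    hδ (fun i _ j _ hij => hv hij)
    (fun j _ => by simpa [Real.dist_eq] using Real.dist_le_of_mem_Icc ht (hAI (hvA j)))
    (fun i _ => le_csSup hbdd (mem_image_of_mem _ (hvA i)))
  have hratio : (b - a) / δ = 2 * (n + 1) / ρ := by
    rw [hδ_def]; field_simp [(sub_pos.2 hab).ne']
  rw [Finset.card_univ, Fintype.card_fin, hratio, Nat.add_sub_cancel] at key
  exact_mod_cast key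

/-- Remez-type inequality: for `0 < ρ < 1` there is a constant `c` depending only on
`k` and `ρ` such that for every compact interval `I = [a,b]`, every polynomial `Q` of
degree `< k` and every measurable `A ⊆ I` with `|A| ≥ ρ|I|`, one has
`sup_{t ∈ I} |Q(t)| ≤ c · sup_{t ∈ A} |Q(t)|`. -/
theorem remez_type_inequality (k : ℕ) (hk : 0 < k) (ρ : ℝ) (hρ0 : 0 < ρ) (hρ1 : ρ < 1) :
    ∃ c : ℝ, 0 < c ∧
      ∀ a b : ℝ, a < b → ∀ Q : Polynomial ℝ, Q.natDegree < k →
        ∀ A : Set ℝ, A ⊆ Set.Icc a b → MeasurableSet A →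
          ρ * (b - a) ≤ (volume A).toReal →
            ∀ t ∈ Set.Icc a b, |Q.eval t| ≤ c * sSup ((fun s => |Q.eval s|) '' A) :=
  remez_type_inequality_general k hk ρ hρ0
end

section
/- Let t > 0 and let Q be a polynomial of degree less than k on a compact interval I with positive length, such that sup_{x ∈ I} |Q(x)| ≥ t. Then there exists a constant c_k depending only on k such that the set {x ∈ I : |Q(x)| > t / c_k} has Lebesgue measure at least |I|/2. -/
/-!
If the level set `{x ∈ I : |Q x| > t / c}` had measure `< |I| / 2`, its complement `E` in `I`,
a closed set, would have measure `> |I| / 2`. Picking points of `E` greedily from the left then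
gives `k` nodes in `E` with mutual distances at least `|I| / (2k)`. On `I` the Lagrange basis
polynomials at these nodes are bounded by `(2k)^(k-1)`, so interpolation bounds `|Q|` on `I` by
`k (2k)^(k-1) t / c = t / 2` for `c = (2k)^k`, contradicting `sup_I |Q| ≥ t`.
-/

open MeasureTheory Set Polynomial Finset

theorem exists_separated_finset_subset_of_lt_volume {E : Set ℝ} (hE : IsClosed E)
    (hbdd : BddBelow E) {δ : ℝ} (hδ : 0 < δ) (n : ℕ)
    (hvol : ENNReal.ofReal (n * δ) < volume E) :
    ∃ s : Finset ℝ, ↑s ⊆ E ∧ #s = n + 1 ∧ ∀ x ∈ s, ∀ y ∈ s, x ≠ y → δ ≤ |x - y| := by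
  induction n generalizing E with
  | zero =>
    obtain ⟨x, hx⟩ := nonempty_of_measure_ne_zero (pos_of_gt hvol).ne'
    exact ⟨{x}, by simpa using hx, rfl, by simp⟩
  | succ n ih =>
    have hne : E.Nonempty := nonempty_of_measure_ne_zero (pos_of_gt hvol).ne'
    set m := sInf E
    have hm : m ∈ E := hE.csInf_mem hne hbdd
    have hlow : volume (E \ Ici (m + δ)) ≤ ENNReal.ofReal δ := by
      calc volume (E \ Ici (m + δ)) ≤ volume (Ico m (m + δ)) :=
            measure_mono fun x ⟨hx, hx'⟩ => ⟨csInf_le hbdd hx, not_le.mp hx'⟩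
        _ = ENNReal.ofReal δ := by simp
    have hvol' : ENNReal.ofReal (n * δ) < volume (E ∩ Ici (m + δ)) := by
      have hsplit :
          ENNReal.ofReal ((n + 1 : ℕ) * δ) = ENNReal.ofReal δ + ENNReal.ofReal (n * δ) := by
        rw [← ENNReal.ofReal_add hδ.le (by positivity)]; push_cast; ring_nf
      rw [hsplit] at hvol
      refine (ENNReal.add_lt_add_iff_left ENNReal.ofReal_ne_top).mp (hvol.trans_le ?_)
      calc volume E ≤ volume (E \ Ici (m + δ)) + volume (E ∩ Ici (m + δ)) := by
            rw [add_comm]; exact measure_le_inter_add_sdiff _ _ _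
        _ ≤ _ := by gcongr
    obtain ⟨s, hsE, hcard, hsep⟩ :=
      ih (hE.inter isClosed_Ici) (hbdd.mono inter_subset_left) hvol'
    have hfar : ∀ x ∈ s, m + δ ≤ x := fun x hx => (hsE hx).2
    have hms : m ∉ s := fun h => by linarith [hfar m h]
    refine ⟨insert m s, ?_, by rw [card_insert_of_notMem hms, hcard], ?_⟩
    · rw [coe_insert, insert_subset_iff]
      exact ⟨hm, fun x hx => (hsE hx).1⟩
    · simp only [Finset.mem_insert]
      rintro x (rfl | hx) y (rfl | hy) hxy
      · exact absurd rfl hxy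
      · rw [abs_sub_comm, abs_of_nonneg] <;> linarith [hfar y hy]
      · rw [abs_of_nonneg] <;> linarith [hfar x hx]
      · exact hsep x hx y hy hxy

section Separated

variable {s : Finset ℝ} {δ D : ℝ} {y : ℝ}

theorem abs_eval_lagrangeBasis_le (hδ : 0 < δ)
    (hsep : ∀ x ∈ s, ∀ x' ∈ s, x ≠ x' → δ ≤ |x - x'|) (hy : ∀ x ∈ s, |y - x| ≤ D)
    {i : ℝ} (hi : i ∈ s) : |(Lagrange.basis s id i).eval y| ≤ (D / δ) ^ (#s - 1) := by
  rw [Lagrange.basis, eval_prod, abs_prod, ← card_erase_of_mem hi, ← prod_const]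
  refine prod_le_prod (fun _ _ => abs_nonneg _) fun j hj => ?_
  obtain ⟨hji, hj⟩ := mem_erase.mp hj
  have hD : 0 ≤ D := (abs_nonneg _).trans (hy i hi)
  rw [Lagrange.basisDivisor, eval_mul, eval_C, eval_sub, eval_X, eval_C, abs_mul, abs_inv,
    inv_mul_eq_div, id, id]
  exact div_le_div₀ hD (hy j hj) hδ (hsep i hi j hj (Ne.symm hji))

theorem abs_eval_le_of_separated_s1 (hδ : 0 < δ)
    (hsep : ∀ x ∈ s, ∀ x' ∈ s, x ≠ x' → δ ≤ |x - x'|) (hy : ∀ x ∈ s, |y - x| ≤ D)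
    {Q : ℝ[X]} (hQ : Q.degree < #s) {M : ℝ} (hM : ∀ x ∈ s, |Q.eval x| ≤ M) :
    |Q.eval y| ≤ #s * (D / δ) ^ (#s - 1) * M := by
  rw [Lagrange.eq_interpolate (injOn_id _) hQ, Lagrange.interpolate_apply, eval_finsetSum]
  calc |∑ i ∈ s, (C (Q.eval (id i)) * Lagrange.basis s id i).eval y|
      ≤ ∑ i ∈ s, |(C (Q.eval (id i)) * Lagrange.basis s id i).eval y| := abs_sum_le_sum_abs _ _
    _ ≤ ∑ _i ∈ s, (D / δ) ^ (#s - 1) * M := by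
        refine sum_le_sum fun i hi => ?_
        rw [eval_mul, eval_C, abs_mul, mul_comm]
        exact mul_le_mul (abs_eval_lagrangeBasis_le hδ hsep hy hi) (hM i hi) (abs_nonneg _)
          (pow_nonneg (div_nonneg ((abs_nonneg _).trans (hy i hi)) hδ.le) _)
    _ = #s * (D / δ) ^ (#s - 1) * M := by rw [sum_const, nsmul_eq_mul, mul_assoc]

end Separated

theorem abs_eval_le_of_half_lt_volume {k : ℕ} (hk : 0 < k) {a b : ℝ} (hab : a < b) {E : Set ℝ}
    (hE : IsClosed E) (hEI : E ⊆ Icc a b) (hvol : ENNReal.ofReal ((b - a) / 2) < volume E)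
    {Q : ℝ[X]} (hQ : Q.natDegree < k) {M : ℝ} (hM : ∀ x ∈ E, |Q.eval x| ≤ M) {y : ℝ}
    (hy : y ∈ Icc a b) : |Q.eval y| ≤ (2 * k) ^ k / 2 * M := by
  set δ := (b - a) / (2 * k) with hδdef
  have hδ : 0 < δ := div_pos (sub_pos.mpr hab) (by positivity)
  have hkδ : ((k - 1 : ℕ) : ℝ) * δ ≤ (b - a) / 2 := by
    calc ((k - 1 : ℕ) : ℝ) * δ ≤ k * δ := by gcongr; exact_mod_cast Nat.sub_le k 1
      _ = (b - a) / 2 := by rw [hδdef]; field_simp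
  obtain ⟨s, hsE, hcard, hsep⟩ := exists_separated_finset_subset_of_lt_volume hE
    (bddBelow_Icc.mono hEI) hδ (k - 1) ((ENNReal.ofReal_le_ofReal hkδ).trans_lt hvol)
  rw [Nat.sub_add_cancel hk] at hcard
  have hdist : ∀ x ∈ s, |y - x| ≤ b - a := fun x hx => by
    have := hEI (hsE hx)
    exact abs_sub_le_iff.mpr ⟨by linarith [hy.2, this.1], by linarith [hy.1, this.2]⟩
  have hdeg : Q.degree < #s := hcard ▸ (degree_le_natDegree.trans_lt (by exact_mod_cast hQ))
  calc |Q.eval y| ≤ #s * ((b - a) / δ) ^ (#s - 1) * M :=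
        abs_eval_le_of_separated_s1 hδ hsep hdist hdeg fun x hx => hM x (hsE hx)
    _ = (2 * k) ^ k / 2 * M := by
        obtain ⟨n, rfl⟩ := Nat.exists_eq_succ_of_ne_zero hk.ne'
        rw [hcard, hδdef, div_div_cancel₀ (sub_pos.mpr hab).ne', Nat.succ_sub_one, pow_succ]
        ring

theorem half_lt_volume_of_volume_lt_half {a b : ℝ} (hab : a ≤ b) {S E : Set ℝ}
    (hS : volume S < ENNReal.ofReal ((b - a) / 2)) (hcover : Icc a b ⊆ S ∪ E) :
    ENNReal.ofReal ((b - a) / 2) < volume E := by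
  by_contra! hE
  have hIcc :
      ENNReal.ofReal ((b - a) / 2) + ENNReal.ofReal ((b - a) / 2) ≤ volume S + volume E := by
    rw [← ENNReal.ofReal_add (by linarith) (by linarith), add_halves, ← Real.volume_Icc]
    exact (measure_mono hcover).trans (measure_union_le _ _)
  have hE_ne_top : volume E ≠ ⊤ := ne_top_of_le_ne_top ENNReal.ofReal_ne_top hE
  exact hIcc.not_gt (ENNReal.add_lt_add_of_lt_of_le hE_ne_top hS hE)

/-- Level-set lemma: if a polynomial `Q` of degree `< k` satisfies `sup_{I} |Q| ≥ t` on a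
compact interval `I` of positive length, then `|{x ∈ I : |Q(x)| > t/c_k}| ≥ |I|/2` for a
constant `c_k` depending only on `k`. -/
theorem polynomial_level_set (k : ℕ) (hk : 0 < k) :
    ∃ c : ℝ, 0 < c ∧
      ∀ a b : ℝ, a < b → ∀ Q : Polynomial ℝ, Q.natDegree < k →
        ∀ t : ℝ, 0 < t → t ≤ sSup ((fun s => |Q.eval s|) '' Set.Icc a b) →
          ENNReal.ofReal ((b - a) / 2) ≤ volume {x ∈ Set.Icc a b | t / c < |Q.eval x|} := by
  refine ⟨(2 * k) ^ k, by positivity, fun a b hab Q hQ t ht hsup => ?_⟩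
  by_contra! hS
  set E := {x ∈ Icc a b | |Q.eval x| ≤ t / (2 * k) ^ k}
  have hE : IsClosed E := isClosed_Icc.inter (isClosed_le Q.continuous.abs continuous_const)
  have hvolE : ENNReal.ofReal ((b - a) / 2) < volume E :=
    half_lt_volume_of_volume_lt_half hab.le hS fun x hx => (lt_or_ge _ _).imp (⟨hx, ·⟩) (⟨hx, ·⟩)
  have hbound : ∀ y ∈ Icc a b, |Q.eval y| ≤ t / 2 := fun y hy =>
    (abs_eval_le_of_half_lt_volume hk hab hE (sep_subset _ _) hvolE hQ (fun x hx => hx.2)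
      hy).trans_eq (by field_simp)
  have hsup_le : sSup ((fun s => |Q.eval s|) '' Icc a b) ≤ t / 2 :=
    csSup_le ((Set.nonempty_Icc.mpr hab.le).image _) (by rintro _ ⟨y, hy, rfl⟩; exact hbound y hy)
  linarith
end

section
/- Let N be a positive integer, let I_j := [0, j/N] × [0, 1/j] ⊂ ℝ² for j = 1,…,N, let 0 < c ≤ 1, and let A_j ⊆ I_j be measurable with |A_j| ≥ c|I_j| for each j. Then there exists a constant c₁ > 0, depending only on c (not on N), such that |⋃_{j=1}^N A_j| ≥ c₁ |⋃_{j=1}^N I_j|. -/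
open MeasureTheory Set

/-- The rectangle `I_j = [0, j/N] × [0, 1/j]` in the plane. -/
def saksRect (N j : ℕ) : Set (ℝ × ℝ) :=
  Set.Icc (0 : ℝ) (j / N) ×ˢ Set.Icc (0 : ℝ) (1 / j)

/-!
Fix an integer `M ≥ 2` with `1/M ≤ c/2` and look only at the lacunary indices `j = M^k`,
`k ≤ K := ⌊log_M N⌋`. Every `I_j` with `M^k ≤ j < M^(k+1)` lies in
`[0, M^(k+1)/N] × [0, 1/M^k]`, so `|⋃ I_j| ≤ (K + 1) M / N`. Conversely, `I_{M^k}` meets the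
earlier rectangles `I_{M^l}`, `l < k`, only inside `[0, M^(k-1)/N] × [0, 1/M^k]`, of area
`1/(MN) ≤ c/(2N)`. Hence `A_{M^k}` keeps area at least `c/(2N)` outside them, and these parts are
pairwise disjoint, so `|⋃ A_j| ≥ (K + 1) c/(2N) ≥ c/(2M) · |⋃ I_j|`.
-/

open ENNReal

lemma nat_mul_le_measure_biUnion_range {α : Type*} [MeasurableSpace α] {μ : Measure α}
    {A B : ℕ → Set α} {n : ℕ} {a δ : ℝ≥0∞} (hA : ∀ k, MeasurableSet (A k))
    (hB : ∀ k, MeasurableSet (B k)) (hAB : ∀ k < n, A k ⊆ B k)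
    (hoverlap : ∀ k < n, μ (A k ∩ ⋃ l ∈ Finset.range k, B l) ≤ δ)
    (hlarge : ∀ k < n, a + δ ≤ μ (A k)) (hδ : δ ≠ ∞) :
    n * a ≤ μ (⋃ k ∈ Finset.range n, A k) := by
  induction n with
  | zero => simp
  | succ n ih =>
    set S := ⋃ l ∈ Finset.range n, B l
    have hS : MeasurableSet S := Finset.measurableSet_biUnion _ fun l _ => hB l
    have hnew : a ≤ μ (A n \ S) := by
      refine ENNReal.le_of_add_le_add_right hδ ?_
      calc a + δ ≤ μ (A n) := hlarge n n.lt_succ_self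
        _ = μ (A n \ S) + μ (A n ∩ S) := (measure_sdiff_add_inter _ hS).symm
        _ ≤ μ (A n \ S) + δ := by gcongr; exact hoverlap n n.lt_succ_self
    have hdisj : Disjoint (⋃ k ∈ Finset.range n, A k) (A n \ S) := by
      refine disjoint_sdiff_right.mono_left (iUnion₂_subset fun k hk => ?_)
      exact (hAB k (Nat.lt_succ_of_lt (Finset.mem_range.1 hk))).trans (subset_biUnion_of_mem (u := B) hk)
    calc ((n + 1 : ℕ) : ℝ≥0∞) * a = n * a + a := by push_cast; ring
      _ ≤ μ (⋃ k ∈ Finset.range n, A k) + μ (A n \ S) := by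
        gcongr
        exact ih (fun k hk => hAB k (by omega)) (fun k hk => hoverlap k (by omega))
          (fun k hk => hlarge k (by omega))
      _ = μ ((⋃ k ∈ Finset.range n, A k) ∪ A n \ S) :=
        (measure_union hdisj ((hA n).diff hS)).symm
      _ ≤ μ (⋃ k ∈ Finset.range (n + 1), A k) := by
        refine measure_mono (union_subset ?_ (sdiff_subset.trans ?_))
        · exact biUnion_subset_biUnion_left (by simp)
        · exact subset_biUnion_of_mem (u := A) (by simp)

lemma volume_Icc_zero_prod_Icc_zero {a : ℝ} (ha : 0 ≤ a) (b : ℝ) :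
    volume (Icc 0 a ×ˢ Icc 0 b) = ENNReal.ofReal (a * b) := by
  rw [Measure.volume_eq_prod, Measure.prod_prod, Real.volume_Icc, Real.volume_Icc,
    sub_zero, sub_zero, ofReal_mul ha]

lemma volume_saksRect (N : ℕ) {j : ℕ} (hj : j ≠ 0) :
    volume (saksRect N j) = ENNReal.ofReal (1 / N) := by
  rw [saksRect, volume_Icc_zero_prod_Icc_zero (by positivity)]
  congr 1
  field_simp

lemma saksRect_subset_Icc_prod_Icc_pow_log {M : ℕ} (hM : 1 < M) (N : ℕ) {j : ℕ} (hj : j ≠ 0) :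
    saksRect N j ⊆
      Icc 0 ((M : ℝ) ^ (Nat.log M j + 1) / N) ×ˢ Icc 0 (1 / (M : ℝ) ^ Nat.log M j) := by
  have hupper : (j : ℝ) ≤ (M : ℝ) ^ (Nat.log M j + 1) := by
    exact_mod_cast (Nat.lt_pow_succ_log_self hM j).le
  have hlower : (M : ℝ) ^ Nat.log M j ≤ j := by exact_mod_cast Nat.pow_log_le_self M hj
  have hpos : (0 : ℝ) < (M : ℝ) ^ Nat.log M j := by positivity
  exact prod_mono (Icc_subset_Icc_right (by gcongr)) (Icc_subset_Icc_right (by gcongr))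

lemma volume_biUnion_saksRect_le {M : ℕ} (hM : 1 < M) (N : ℕ) :
    volume (⋃ j ∈ Finset.Icc 1 N, saksRect N j) ≤
      ENNReal.ofReal ((Nat.log M N + 1) * (M / N)) := by
  set R : ℕ → Set (ℝ × ℝ) := fun k => Icc 0 ((M : ℝ) ^ (k + 1) / N) ×ˢ Icc 0 (1 / (M : ℝ) ^ k)
  have hcover : (⋃ j ∈ Finset.Icc 1 N, saksRect N j) ⊆
      ⋃ k ∈ Finset.range (Nat.log M N + 1), R k := by
    refine iUnion₂_subset fun j hj => ?_
    rw [Finset.mem_Icc] at hj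
    refine (saksRect_subset_Icc_prod_Icc_pow_log hM N (by omega)).trans ?_
    refine subset_biUnion_of_mem (u := R) ?_
    simpa [Nat.lt_succ_iff] using Nat.log_mono_right hj.2
  have hR (k : ℕ) : volume (R k) = ENNReal.ofReal (M / N) := by
    rw [volume_Icc_zero_prod_Icc_zero (by positivity)]
    congr 1
    have : (M : ℝ) ^ k ≠ 0 := by positivity
    field_simp
    ring
  calc _ ≤ _ := measure_mono hcover
    _ ≤ _ := measure_biUnion_finset_le _ _
    _ = _ := by
      simp only [hR, Finset.sum_const, Finset.card_range, nsmul_eq_mul]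
      rw [← ofReal_natCast, ← ofReal_mul (by positivity)]
      push_cast
      rfl

lemma saksRect_pow_inter_biUnion_subset {M : ℕ} (hM : 0 < M) (N k : ℕ) :
    saksRect N (M ^ k) ∩ ⋃ l ∈ Finset.range k, saksRect N (M ^ l) ⊆
      Icc 0 ((M : ℝ) ^ k / (M * N)) ×ˢ Icc 0 (1 / (M : ℝ) ^ k) := by
  rintro x ⟨⟨-, hx₂⟩, hx⟩
  simp only [mem_iUnion, Finset.mem_range, exists_prop] at hx
  obtain ⟨l, hlk, ⟨hx₁, -⟩⟩ := hx
  have hpow : (M : ℝ) ^ l * M ≤ (M : ℝ) ^ k := by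
    rw [← pow_succ]
    exact pow_le_pow_right₀ (by exact_mod_cast hM) hlk
  refine ⟨⟨hx₁.1, hx₁.2.trans ?_⟩, by simpa using hx₂⟩
  have hM0 : (M : ℝ) ≠ 0 := by positivity
  push_cast
  rw [mul_comm (M : ℝ), ← mul_div_mul_right _ (N : ℝ) hM0]
  gcongr

lemma volume_saksRect_pow_inter_biUnion_le {M : ℕ} (hM : 0 < M) (N k : ℕ) :
    volume (saksRect N (M ^ k) ∩ ⋃ l ∈ Finset.range k, saksRect N (M ^ l)) ≤
      ENNReal.ofReal (1 / (M * N)) := by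
  refine (measure_mono (saksRect_pow_inter_biUnion_subset hM N k)).trans_eq ?_
  rw [volume_Icc_zero_prod_Icc_zero (by positivity)]
  congr 1
  have : (M : ℝ) ^ k ≠ 0 := by positivity
  field_simp

lemma ofReal_div_le_volume_of_subset_saksRect {N j : ℕ} {c : ℝ} {A : Set (ℝ × ℝ)} (hj : j ≠ 0)
    (hA : A ⊆ saksRect N j) (h : c * (volume (saksRect N j)).toReal ≤ (volume A).toReal) :
    ENNReal.ofReal (c / N) ≤ volume A := by
  have hfin : volume A ≠ ∞ :=
    ne_top_of_le_ne_top (by rw [volume_saksRect N hj]; exact ofReal_ne_top) (measure_mono hA)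
  rw [volume_saksRect N hj, toReal_ofReal (by positivity)] at h
  rw [ofReal_le_iff_le_toReal hfin, div_eq_mul_one_div]
  exact h

lemma ofReal_le_volume_biUnion_of_subset_saksRect {M N : ℕ} (hM : 1 < M) (hN : 0 < N) {c : ℝ}
    (hMc : 1 / (M : ℝ) ≤ c / 2) {A : ℕ → Set (ℝ × ℝ)} (hAm : ∀ j, MeasurableSet (A j))
    (hsub : ∀ j, 1 ≤ j → j ≤ N → A j ⊆ saksRect N j)
    (hvol : ∀ j, 1 ≤ j → j ≤ N → c * (volume (saksRect N j)).toReal ≤ (volume (A j)).toReal) :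
    ENNReal.ofReal ((Nat.log M N + 1) * (c / (2 * N))) ≤ volume (⋃ j ∈ Finset.Icc 1 N, A j) := by
  set K := Nat.log M N
  have hc : 0 < c := by linarith [(by positivity : (0 : ℝ) < 1 / M)]
  have hpow (k : ℕ) (hk : k < K + 1) : 1 ≤ M ^ k ∧ M ^ k ≤ N :=
    ⟨Nat.one_le_pow _ _ (by omega),
      (Nat.pow_le_pow_right (by omega) (by omega)).trans (Nat.pow_log_le_self M hN.ne')⟩
  have hlarge (k : ℕ) (hk : k < K + 1) :
      ENNReal.ofReal (c / (2 * N)) + ENNReal.ofReal (1 / (M * N)) ≤ volume (A (M ^ k)) := by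
    refine le_trans ?_ (ofReal_div_le_volume_of_subset_saksRect (by positivity)
      (hsub _ (hpow k hk).1 (hpow k hk).2) (hvol _ (hpow k hk).1 (hpow k hk).2))
    rw [← ofReal_add (by positivity) (by positivity)]
    apply ofReal_le_ofReal
    calc c / (2 * N) + 1 / (M * N) = (c / 2 + 1 / M) / N := by ring
      _ ≤ c / N := by gcongr; linarith
  calc _ = ((K + 1 : ℕ) : ℝ≥0∞) * ENNReal.ofReal (c / (2 * N)) := by
        rw [ofReal_mul (by positivity), ← ofReal_natCast]
        push_cast
        rfl
    _ ≤ volume (⋃ k ∈ Finset.range (K + 1), A (M ^ k)) :=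
        nat_mul_le_measure_biUnion_range (fun k => hAm _)
          (fun k => measurableSet_Icc.prod measurableSet_Icc)
          (fun k hk => hsub _ (hpow k hk).1 (hpow k hk).2)
          (fun k hk => (measure_mono (inter_subset_inter_left _
            (hsub _ (hpow k hk).1 (hpow k hk).2))).trans
            (volume_saksRect_pow_inter_biUnion_le (by omega) N k))
          hlarge ofReal_ne_top
    _ ≤ _ := by
        refine measure_mono (iUnion₂_subset fun k hk => ?_)
        exact subset_biUnion_of_mem (u := A) (by simpa using hpow k (by simpa using hk))

theorem saks_union_lower_bound_general (c : ℝ) (hc0 : 0 < c) :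
    ∃ c₁ : ℝ, 0 < c₁ ∧
      ∀ N : ℕ, 0 < N → ∀ A : ℕ → Set (ℝ × ℝ), (∀ j, MeasurableSet (A j)) →
        (∀ j, 1 ≤ j → j ≤ N → A j ⊆ saksRect N j) →
        (∀ j, 1 ≤ j → j ≤ N →
          c * (volume (saksRect N j)).toReal ≤ (volume (A j)).toReal) →
        c₁ * (volume (⋃ j ∈ Finset.Icc 1 N, saksRect N j)).toReal ≤
          (volume (⋃ j ∈ Finset.Icc 1 N, A j)).toReal := by
  obtain ⟨M, hM, hMc⟩ : ∃ M : ℕ, 1 < M ∧ 1 / (M : ℝ) ≤ c / 2 := by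
    obtain ⟨n, hn⟩ := exists_nat_one_div_lt (half_pos hc0)
    exact ⟨n + 2, by omega, le_trans (by push_cast; gcongr; norm_num) hn.le⟩
  refine ⟨c / (2 * M), by positivity, fun N hN A hAm hsub hvol => ?_⟩
  have hunionI := volume_biUnion_saksRect_le hM N
  have hunionA := ofReal_le_volume_biUnion_of_subset_saksRect hM hN hMc hAm hsub hvol
  have hfin : volume (⋃ j ∈ Finset.Icc 1 N, A j) ≠ ∞ := by
    refine ne_top_of_le_ne_top (hunionI.trans_lt ofReal_lt_top).ne (measure_mono ?_)
    exact iUnion₂_mono fun j hj => by rw [Finset.mem_Icc] at hj; exact hsub j hj.1 hj.2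
  calc c / (2 * M) * (volume (⋃ j ∈ Finset.Icc 1 N, saksRect N j)).toReal
      ≤ c / (2 * M) * ((Nat.log M N + 1) * (M / N)) := by
        gcongr
        exact toReal_le_of_le_ofReal (by positivity) hunionI
    _ = (Nat.log M N + 1) * (c / (2 * N)) := by field_simp
    _ ≤ _ := (ofReal_le_iff_le_toReal hfin).1 hunionA

/-- If `A_j ⊆ I_j` with `|A_j| ≥ c|I_j|`, then `|⋃ A_j| ≥ c₁ |⋃ I_j|` for a constant
`c₁ > 0` depending only on `c` (and not on `N`). -/
theorem saks_union_lower_bound (c : ℝ) (hc0 : 0 < c) (hc1 : c ≤ 1) :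
    ∃ c₁ : ℝ, 0 < c₁ ∧
      ∀ N : ℕ, 0 < N → ∀ A : ℕ → Set (ℝ × ℝ), (∀ j, MeasurableSet (A j)) →
        (∀ j, 1 ≤ j → j ≤ N → A j ⊆ saksRect N j) →
        (∀ j, 1 ≤ j → j ≤ N →
          c * (volume (saksRect N j)).toReal ≤ (volume (A j)).toReal) →
        c₁ * (volume (⋃ j ∈ Finset.Icc 1 N, saksRect N j)).toReal ≤
          (volume (⋃ j ∈ Finset.Icc 1 N, A j)).toReal :=
  saks_union_lower_bound_general c hc0
end

section
/- Let I = I₁ × I₂ be a rectangle in the plane with positive area, let k₁, k₂ be positive integers, and let P_I denote the orthogonal projection in L²(I) onto the space of bivariate polynomials of degree less than k₁ in the first variable and less than k₂ in the second. Suppose φ ∈ L²(I) satisfies (1/|I|) ∫_I φ ≥ c_{k₁} c_{k₂} t for some t > 0, where c_{k₁}, c_{k₂} are the constants from the one-dimensional level-set lemma for polynomials. Then there exists a measurable set A ⊆ I with |A| ≥ |I|/4 such that |P_I φ(x)| ≥ t for all x ∈ A. -/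
/-!
Testing against the constant polynomial `1` shows that `p` has the same mean over `I` as `φ`,
so `|p| ≥ c₁ c₂ t` at some point `(x₀, y₀) ∈ I`. The one-dimensional level-set lemma applied
to the row `x ↦ p (x, y₀)` gives `|p (x, y₀)| > c₂ t` for `x` in a set of measure `≥ |I₁| / 2`;
for each such `x` it applies again to the column `y ↦ p (x, y)`, giving `|p (x, y)| > t` on a
set of measure `≥ |I₂| / 2`. Fubini turns these bounds into `|{|p| ≥ t} ∩ I| ≥ |I| / 4`.
-/

open MeasureTheory Set

/-- `p` is (the restriction of) a bivariate polynomial of degree `< k₁` in the first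
variable and `< k₂` in the second. -/
def IsBivarPolyLt (k₁ k₂ : ℕ) (p : ℝ × ℝ → ℝ) : Prop :=
  ∃ Q : MvPolynomial (Fin 2) ℝ, Q.degreeOf 0 < k₁ ∧ Q.degreeOf 1 < k₂ ∧
    ∀ x y : ℝ, p (x, y) = MvPolynomial.eval ![x, y] Q

namespace IsBivarPolyLt

variable {k₁ k₂ : ℕ} {p : ℝ × ℝ → ℝ}

theorem const (hk₁ : 0 < k₁) (hk₂ : 0 < k₂) (c : ℝ) : IsBivarPolyLt k₁ k₂ fun _ => c :=
  ⟨MvPolynomial.C c, by rwa [MvPolynomial.degreeOf_C], by rwa [MvPolynomial.degreeOf_C],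
    fun _ _ => (MvPolynomial.eval_C _).symm⟩

theorem continuous (hp : IsBivarPolyLt k₁ k₂ p) : Continuous p := by
  obtain ⟨Q, -, -, hpQ⟩ := hp
  have hp_eq : p = fun z => MvPolynomial.eval ![z.1, z.2] Q := funext fun z => hpQ z.1 z.2
  rw [hp_eq]
  exact (MvPolynomial.continuous_eval Q).comp
    (continuous_pi fun i => by fin_cases i <;> fun_prop)

theorem measurableSet_le_abs (hp : IsBivarPolyLt k₁ k₂ p) {S : Set (ℝ × ℝ)}
    (hS : MeasurableSet S) (t : ℝ) : MeasurableSet {z ∈ S | t ≤ |p z|} :=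
  hS.inter (isClosed_le continuous_const hp.continuous.abs).measurableSet

theorem comp_swap (hp : IsBivarPolyLt k₁ k₂ p) : IsBivarPolyLt k₂ k₁ (p ∘ Prod.swap) := by
  obtain ⟨Q, hQ₁, hQ₂, hpQ⟩ := hp
  have hdeg (i : Fin 2) : (MvPolynomial.rename (Equiv.swap 0 1) Q).degreeOf (Equiv.swap 0 1 i)
      = Q.degreeOf i := MvPolynomial.degreeOf_rename_of_injective (Equiv.injective _) i
  refine ⟨MvPolynomial.rename (Equiv.swap 0 1) Q, ?_, ?_, fun x y => ?_⟩
  · simpa using (hdeg 1).trans_lt hQ₂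
  · simpa using (hdeg 0).trans_lt hQ₁
  · have hswap : ![x, y] ∘ Equiv.swap (0 : Fin 2) 1 = ![y, x] := by
      funext i
      fin_cases i <;> rfl
    rw [MvPolynomial.eval_rename, hswap, Function.comp_apply, Prod.swap_prod_mk, hpQ]

theorem exists_polynomial_fst (hp : IsBivarPolyLt k₁ k₂ p) (y : ℝ) :
    ∃ P : Polynomial ℝ, P.natDegree < k₁ ∧ ∀ x, P.eval x = p (x, y) := by
  obtain ⟨Q, hQ₁, -, hpQ⟩ := hp
  refine ⟨(MvPolynomial.finSuccEquiv ℝ 1 Q).map (MvPolynomial.eval ![y]), ?_, fun x => ?_⟩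
  · exact (Polynomial.natDegree_map_le).trans_lt
      ((MvPolynomial.natDegree_finSuccEquiv Q).trans_lt hQ₁)
  · rw [← MvPolynomial.eval_eq_eval_mv_eval', hpQ]
    rfl

theorem exists_polynomial_snd (hp : IsBivarPolyLt k₁ k₂ p) (x : ℝ) :
    ∃ P : Polynomial ℝ, P.natDegree < k₂ ∧ ∀ y, P.eval y = p (x, y) :=
  hp.comp_swap.exists_polynomial_fst x

end IsBivarPolyLt

def IsPolyLevelSetConst (k : ℕ) (c : ℝ) : Prop :=
  ∀ a b : ℝ, a < b → ∀ Q : Polynomial ℝ, Q.natDegree < k →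
    ∀ s : ℝ, 0 < s → s ≤ sSup ((fun u => |Q.eval u|) '' Icc a b) →
      ENNReal.ofReal ((b - a) / 2) ≤ volume {x ∈ Icc a b | s / c < |Q.eval x|}

theorem IsPolyLevelSetConst.half_le_volume_of_le_abs_eval {k : ℕ} {c : ℝ}
    (hc : IsPolyLevelSetConst k c)
    {a b : ℝ} (hab : a < b) {Q : Polynomial ℝ} (hQ : Q.natDegree < k) {s : ℝ} (hs : 0 < s)
    {x₀ : ℝ} (hx₀ : x₀ ∈ Icc a b) (hsx₀ : s ≤ |Q.eval x₀|) :
    ENNReal.ofReal ((b - a) / 2) ≤ volume {x ∈ Icc a b | s / c < |Q.eval x|} := by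
  have hbdd : BddAbove ((fun u => |Q.eval u|) '' Icc a b) :=
    (isCompact_Icc.image (Q.continuous.abs)).bddAbove
  exact hc a b hab Q hQ s hs (hsx₀.trans (le_csSup hbdd (mem_image_of_mem _ hx₀)))

theorem MeasureTheory.Measure.mul_le_prod_apply_of_le_slices {α β : Type*} [MeasurableSpace α]
    [MeasurableSpace β] {μ : Measure α} {ν : Measure β} [SFinite ν] {A : Set (α × β)}
    (hA : MeasurableSet A) {E : Set α} {r : ENNReal} (hE : ∀ x ∈ E, r ≤ ν (Prod.mk x ⁻¹' A)) :
    μ E * r ≤ μ.prod ν A :=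
  calc μ E * r = ∫⁻ _ in E, r ∂μ := by rw [setLIntegral_const, mul_comm]
    _ ≤ ∫⁻ x in E, ν (Prod.mk x ⁻¹' A) ∂μ :=
        setLIntegral_mono (measurable_measure_prodMk_left hA) hE
    _ ≤ ∫⁻ x, ν (Prod.mk x ⁻¹' A) ∂μ := setLIntegral_le_lintegral _ _
    _ = μ.prod ν A := (Measure.prod_apply hA).symm

theorem volume_Icc_prod_Icc (a₁ b₁ a₂ b₂ : ℝ) :
    volume (Icc a₁ b₁ ×ˢ Icc a₂ b₂) = ENNReal.ofReal (b₁ - a₁) * ENNReal.ofReal (b₂ - a₂) := by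
  rw [Measure.volume_eq_prod, Measure.prod_prod, Real.volume_Icc, Real.volume_Icc]

theorem volume_Icc_prod_div_four_le_of_le_abs {k₁ k₂ : ℕ} {c₁ c₂ : ℝ}
    (hc₁ : IsPolyLevelSetConst k₁ c₁) (hc₂ : IsPolyLevelSetConst k₂ c₂) (hc₁0 : 0 < c₁)
    (hc₂0 : 0 < c₂) {a₁ b₁ a₂ b₂ : ℝ} (h₁ : a₁ < b₁) (h₂ : a₂ < b₂) {p : ℝ × ℝ → ℝ}
    (hp : IsBivarPolyLt k₁ k₂ p) {t : ℝ} (ht : 0 < t) {z₀ : ℝ × ℝ}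
    (hz₀ : z₀ ∈ Icc a₁ b₁ ×ˢ Icc a₂ b₂) (hpz₀ : c₁ * c₂ * t ≤ |p z₀|) :
    volume (Icc a₁ b₁ ×ˢ Icc a₂ b₂) / 4 ≤
      volume {z ∈ Icc a₁ b₁ ×ˢ Icc a₂ b₂ | t ≤ |p z|} := by
  set A := {z ∈ Icc a₁ b₁ ×ˢ Icc a₂ b₂ | t ≤ |p z|}
  have hA : MeasurableSet A := hp.measurableSet_le_abs (measurableSet_Icc.prod measurableSet_Icc) t
  obtain ⟨x₀, y₀⟩ := z₀
  obtain ⟨P, hP, hPp⟩ := hp.exists_polynomial_fst y₀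
  have hrow := hc₁.half_le_volume_of_le_abs_eval h₁ hP (s := c₁ * c₂ * t) (by positivity) hz₀.1
    (by rwa [hPp])
  rw [mul_assoc, mul_div_cancel_left₀ _ hc₁0.ne'] at hrow
  have hcol : ∀ x ∈ {x ∈ Icc a₁ b₁ | c₂ * t < |P.eval x|},
      ENNReal.ofReal ((b₂ - a₂) / 2) ≤ volume (Prod.mk x ⁻¹' A) := by
    rintro x ⟨hx, hPx⟩
    obtain ⟨R, hR, hRp⟩ := hp.exists_polynomial_snd x
    refine (hc₂.half_le_volume_of_le_abs_eval h₂ hR (s := c₂ * t) (by positivity) hz₀.2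
      (by rw [hRp, ← hPp]; exact hPx.le)).trans (measure_mono ?_)
    rintro y ⟨hy, hRy⟩
    rw [mul_div_cancel_left₀ _ hc₂0.ne', hRp] at hRy
    exact ⟨⟨hx, hy⟩, hRy.le⟩
  calc volume (Icc a₁ b₁ ×ˢ Icc a₂ b₂) / 4
      = ENNReal.ofReal ((b₁ - a₁) / 2) * ENNReal.ofReal ((b₂ - a₂) / 2) := by
        rw [volume_Icc_prod_Icc, ← ENNReal.ofReal_mul (by linarith),
          ← ENNReal.ofReal_mul (by linarith), ← ENNReal.ofReal_ofNat 4,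
          ← ENNReal.ofReal_div_of_pos four_pos]
        ring_nf
    _ ≤ volume {x ∈ Icc a₁ b₁ | c₂ * t < |P.eval x|} * ENNReal.ofReal ((b₂ - a₂) / 2) := by
        gcongr
    _ ≤ volume A := by
        rw [Measure.volume_eq_prod]
        exact Measure.mul_le_prod_apply_of_le_slices hA hcol

/-- If the mean of `φ` over the rectangle `I = I₁ × I₂` is at least `c₁ c₂ t`, where
`c₁, c₂` are constants satisfying the one-dimensional level-set lemma for polynomials of
degrees `< k₁`, `< k₂` respectively, then the orthogonal projection `p` of `φ` onto
bivariate polynomials of degrees `< (k₁, k₂)` satisfies `|p| ≥ t` on a measurable set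
`A ⊆ I` with `|A| ≥ |I|/4`. -/
theorem projection_large_on_big_set (k₁ k₂ : ℕ) (hk₁ : 0 < k₁) (hk₂ : 0 < k₂)
    (c₁ c₂ : ℝ) (hc₁0 : 0 < c₁) (hc₂0 : 0 < c₂)
    (hc₁ : ∀ a b : ℝ, a < b → ∀ Q : Polynomial ℝ, Q.natDegree < k₁ →
      ∀ s : ℝ, 0 < s → s ≤ sSup ((fun u => |Q.eval u|) '' Set.Icc a b) →
        ENNReal.ofReal ((b - a) / 2) ≤ volume {x ∈ Set.Icc a b | s / c₁ < |Q.eval x|})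
    (hc₂ : ∀ a b : ℝ, a < b → ∀ Q : Polynomial ℝ, Q.natDegree < k₂ →
      ∀ s : ℝ, 0 < s → s ≤ sSup ((fun u => |Q.eval u|) '' Set.Icc a b) →
        ENNReal.ofReal ((b - a) / 2) ≤ volume {x ∈ Set.Icc a b | s / c₂ < |Q.eval x|})
    (a₁ b₁ a₂ b₂ : ℝ) (h₁ : a₁ < b₁) (h₂ : a₂ < b₂)
    (I : Set (ℝ × ℝ)) (hI : I = Set.Icc a₁ b₁ ×ˢ Set.Icc a₂ b₂)
    (φ : ℝ × ℝ → ℝ) (hφ : MemLp φ 2 (volume.restrict I))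
    (t : ℝ) (ht : 0 < t)
    (hmean : c₁ * c₂ * t ≤ (∫ x in I, φ x) / (volume I).toReal)
    (p : ℝ × ℝ → ℝ) (hp : IsBivarPolyLt k₁ k₂ p)
    (horth : ∀ q : ℝ × ℝ → ℝ, IsBivarPolyLt k₁ k₂ q →
      ∫ x in I, (φ x - p x) * q x = 0) :
    ∃ A : Set (ℝ × ℝ), MeasurableSet A ∧ A ⊆ I ∧
      volume I / 4 ≤ volume A ∧ ∀ x ∈ A, t ≤ |p x| := by
  have hI_ne_top : volume I ≠ ⊤ := hI ▸ (isCompact_Icc.prod isCompact_Icc).measure_lt_top.ne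
  have hI_ne_zero : volume I ≠ 0 := by
    rw [hI, volume_Icc_prod_Icc]
    simp [h₁, h₂]
  have hp_int : IntegrableOn p I :=
    hp.continuous.continuousOn.integrableOn_compact (hI ▸ isCompact_Icc.prod isCompact_Icc)
  have hφ_int : IntegrableOn φ I :=
    have := isFiniteMeasure_restrict.2 hI_ne_top
    hφ.integrable one_le_two
  have hp_φ : ∫ x in I, p x = ∫ x in I, φ x := by
    have h := horth _ (IsBivarPolyLt.const hk₁ hk₂ 1)
    simp only [mul_one] at h
    rw [integral_sub hφ_int hp_int, sub_eq_zero] at h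
    exact h.symm
  obtain ⟨z₀, hz₀, hpz₀⟩ := exists_setAverage_le hI_ne_zero hI_ne_top hp_int
  rw [setAverage_eq, hp_φ, smul_eq_mul, inv_mul_eq_div] at hpz₀
  subst hI
  exact ⟨_, hp.measurableSet_le_abs (measurableSet_Icc.prod measurableSet_Icc) t, sep_subset _ _,
    volume_Icc_prod_div_four_le_of_le_abs hc₁ hc₂ hc₁0 hc₂0 h₁ h₂ hp ht hz₀
      ((hmean.trans hpz₀).trans (le_abs_self _)), fun _ hz => hz.2⟩
end

section
/- Let K : [0,1]^d × [0,1]^d → ℝ be a kernel and suppose there exist constants C > 0 and γ ∈ (0,1) and a partition of [0,1]^d into axis-parallel rectangles (I_i)_{1 ≤ i ≤ n} (multi-indexed) such that |K(x,y)| ≤ C γ^{|i−j|₁} / |I_{ij}| whenever x ∈ I_i, y ∈ I_j, where I_{ij} is the smallest axis-parallel rectangle containing both I_i and I_j. Then the integral operator Tf(x) = ∫ K(x,y) f(y) dy satisfies the pointwise bound |Tf(x)| ≤ C (∑_{j ∈ ℤ^d} γ^{|j|₁}) · M_S f(x) for all x ∈ [0,1]^d and integrable f. -/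
/-!
Fix the cell `I_i` containing `x` and split `∫ |K(x,y) f(y)| dy` over the cells `I_j`. On `I_j`
the kernel is at most `C γ^{|i-j|₁} / |I_{ij}|`, and since `I_j ⊆ I_{ij}` the cell contributes at
most `C γ^{|i-j|₁}` times the average of `|f|` over `I_{ij}`. As `x ∈ I_i ⊆ I_{ij}`, that average
is at most `M_S f(x)`, and `j ↦ i - j` is injective, so the weights sum to at most
`∑_{j ∈ ℤ^d} γ^{|j|₁}`.
-/

open MeasureTheory Set ENNReal

/-- The unit cube `[0,1]^d`. -/
def unitCube (d : ℕ) : Set (Fin d → ℝ) := Set.univ.pi fun _ => Set.Icc (0 : ℝ) 1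

/-- The strong maximal function: supremum of averages of `|f|` over axis-parallel
rectangles `∏ [a μ, b μ] ⊆ [0,1]^d` containing `x`. -/
noncomputable def strongMaximal (d : ℕ) (f : (Fin d → ℝ) → ℝ) (x : Fin d → ℝ) : ℝ≥0∞ :=
  ⨆ (a : Fin d → ℝ) (b : Fin d → ℝ)
    (_ : ∀ μ, 0 ≤ a μ ∧ a μ < b μ ∧ b μ ≤ 1)
    (_ : x ∈ Set.univ.pi fun μ => Set.Icc (a μ) (b μ)),
    (∫⁻ y in Set.univ.pi fun μ => Set.Icc (a μ) (b μ), ENNReal.ofReal |f y|) /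
      volume (Set.univ.pi fun μ => Set.Icc (a μ) (b μ))

/-- The grid cell `I_i = ∏_μ [t_μ(i_μ), t_μ(i_μ + 1)]` of a tensor grid `t`. -/
def gridCell (d : ℕ) (t : Fin d → ℕ → ℝ) (i : Fin d → ℕ) : Set (Fin d → ℝ) :=
  Set.univ.pi fun μ => Set.Icc (t μ (i μ)) (t μ (i μ + 1))

/-- The envelope `I_{ij} = ∏_μ [t_μ(min(i_μ,j_μ)), t_μ(max(i_μ,j_μ)+1)]`, the smallest
axis-parallel rectangle containing both `I_i` and `I_j`. -/
def gridEnvelope (d : ℕ) (t : Fin d → ℕ → ℝ) (i j : Fin d → ℕ) : Set (Fin d → ℝ) :=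
  Set.univ.pi fun μ => Set.Icc (t μ (min (i μ) (j μ))) (t μ (max (i μ) (j μ) + 1))

lemma summable_pow_natAbs {γ : ℝ} (hγ0 : 0 ≤ γ) (hγ1 : γ < 1) :
    Summable fun k : ℤ => γ ^ k.natAbs :=
  .of_nat_of_neg (by simpa using summable_geometric_of_lt_one hγ0 hγ1)
    (by simpa using summable_geometric_of_lt_one hγ0 hγ1)

/-- Each finite partial sum is bounded by the product of the one-dimensional sums. -/
lemma summable_pow_sum_natAbs {ι : Type*} [Fintype ι] {γ : ℝ} (hγ0 : 0 ≤ γ) (hγ1 : γ < 1) :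
    Summable fun j : ι → ℤ => γ ^ (∑ μ, (j μ).natAbs) := by
  classical
  set S := ∑' k : ℤ, γ ^ k.natAbs
  refine summable_of_sum_le (c := S ^ Fintype.card ι) (fun j => by positivity) fun u => ?_
  set box := Fintype.piFinset fun μ => u.image fun j => j μ
  have hu : u ⊆ box := fun j hj => Fintype.mem_piFinset.2 fun μ => Finset.mem_image_of_mem _ hj
  calc ∑ j ∈ u, γ ^ (∑ μ, (j μ).natAbs)
      ≤ ∑ j ∈ box, γ ^ (∑ μ, (j μ).natAbs) :=
        Finset.sum_le_sum_of_subset_of_nonneg hu fun j _ _ => by positivity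
    _ = ∏ μ, ∑ k ∈ u.image (fun j => j μ), γ ^ k.natAbs := by
        rw [Finset.prod_univ_sum]
        exact Finset.sum_congr rfl fun j _ => (Finset.prod_pow_eq_pow_sum _ _ _).symm
    _ ≤ ∏ _μ : ι, S :=
        Finset.prod_le_prod (fun μ _ => Finset.sum_nonneg fun k _ => by positivity)
          fun μ _ => (summable_pow_natAbs hγ0 hγ1).sum_le_tsum _ fun k _ => by positivity
    _ = S ^ Fintype.card ι := Finset.prod_const _

lemma sum_pow_sum_natAbs_sub_le_tsum {ι : Type*} [Fintype ι] {γ : ℝ} (hγ0 : 0 ≤ γ)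
    (hγ1 : γ < 1) (i : ι → ℕ) (F : Finset (ι → ℕ)) :
    ∑ j ∈ F, γ ^ (∑ μ, ((i μ : ℤ) - j μ).natAbs) ≤ ∑' k : ι → ℤ, γ ^ (∑ μ, (k μ).natAbs) := by
  classical
  have hinj : Set.InjOn (fun (j : ι → ℕ) μ => (i μ : ℤ) - j μ) F := fun j₁ _ j₂ _ h =>
    funext fun μ => by simpa using congrFun h μ
  exact (Finset.sum_image (f := fun k : ι → ℤ => γ ^ (∑ μ, (k μ).natAbs)) hinj).symm.trans_le <|
    (summable_pow_sum_natAbs hγ0 hγ1).sum_le_tsum _ fun k _ => by positivity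

lemma exists_lt_mem_Icc_of_mem_Icc {α : Type*} [LinearOrder α] (t : ℕ → α) {n : ℕ} (hn : 0 < n)
    {x : α} (hx : x ∈ Icc (t 0) (t n)) : ∃ k < n, x ∈ Icc (t k) (t (k + 1)) := by
  induction n with
  | zero => exact absurd hn (lt_irrefl 0)
  | succ m ih =>
    by_cases hm : 0 < m ∧ x ≤ t m
    · obtain ⟨k, hk, hxk⟩ := ih hm.1 ⟨hx.1, hm.2⟩
      exact ⟨k, hk.trans m.lt_succ_self, hxk⟩
    · refine ⟨m, m.lt_succ_self, ?_, hx.2⟩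
      rcases Nat.eq_zero_or_pos m with rfl | hm0
      · exact hx.1
      · exact (lt_of_not_ge fun h => hm ⟨hm0, h⟩).le

lemma lintegral_biUnion_finset_le {α ι : Type*} [MeasurableSpace α] {μ : Measure α}
    (T : Finset ι) (s : ι → Set α) (f : α → ℝ≥0∞) :
    ∫⁻ x in ⋃ i ∈ T, s i, f x ∂μ ≤ ∑ i ∈ T, ∫⁻ x in s i, f x ∂μ := by
  calc ∫⁻ x in ⋃ i ∈ T, s i, f x ∂μ
      ≤ ∫⁻ x, f x ∂Measure.sum fun i : T => μ.restrict (s i) :=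
        lintegral_mono' (Measure.restrict_biUnion_le T.countable_toSet) le_rfl
    _ = ∑ i ∈ T, ∫⁻ x in s i, f x ∂μ := by
        rw [lintegral_sum_measure, Finset.tsum_subtype T fun i => ∫⁻ x in s i, f x ∂μ]

lemma ofReal_abs_integral_mul_le_lintegral {α : Type*} [MeasurableSpace α] {μ : Measure α}
    (k f : α → ℝ) :
    ENNReal.ofReal |∫ y, k y * f y ∂μ| ≤ ∫⁻ y, ENNReal.ofReal (|k y| * |f y|) ∂μ := by
  simpa only [← Real.enorm_eq_ofReal_abs, abs_mul, ← abs_mul]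
    using enorm_integral_le_lintegral_enorm fun y => k y * f y

lemma setLIntegral_mul_le_mul_average {α : Type*} [MeasurableSpace α] {μ : Measure α}
    {s R : Set α} (hs : MeasurableSet s) (hsR : s ⊆ R) (hR : μ R ≠ ∞) {k f : α → ℝ} {c : ℝ}
    (hk : ∀ y ∈ s, |k y| ≤ c / (μ R).toReal) :
    ∫⁻ y in s, ENNReal.ofReal (|k y| * |f y|) ∂μ ≤
      ENNReal.ofReal c * ((∫⁻ y in R, ENNReal.ofReal |f y| ∂μ) / μ R) := by
  rcases eq_or_ne (μ R) 0 with hR0 | hR0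
  · rw [setLIntegral_measure_zero _ _ (measure_mono_null hsR hR0)]
    exact zero_le
  have hRpos : 0 < (μ R).toReal := ENNReal.toReal_pos hR0 hR
  calc ∫⁻ y in s, ENNReal.ofReal (|k y| * |f y|) ∂μ
      ≤ ∫⁻ y in s, ENNReal.ofReal (c / (μ R).toReal) * ENNReal.ofReal |f y| ∂μ := by
        refine setLIntegral_mono' hs fun y hy => ?_
        rw [ENNReal.ofReal_mul (abs_nonneg _)]
        gcongr
        exact hk y hy
    _ ≤ ENNReal.ofReal (c / (μ R).toReal) * ∫⁻ y in R, ENNReal.ofReal |f y| ∂μ := by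
        rw [lintegral_const_mul' _ _ ofReal_ne_top]
        gcongr
    _ = ENNReal.ofReal c * ((∫⁻ y in R, ENNReal.ofReal |f y| ∂μ) / μ R) := by
        rw [ENNReal.ofReal_div_of_pos hRpos, ENNReal.ofReal_toReal hR, div_eq_mul_inv,
          div_eq_mul_inv]
        ring

lemma setLIntegral_div_volume_le_strongMaximal {d : ℕ} (f : (Fin d → ℝ) → ℝ) {a b x : Fin d → ℝ}
    (hab : ∀ μ, 0 ≤ a μ ∧ a μ < b μ ∧ b μ ≤ 1) (hx : x ∈ univ.pi fun μ => Icc (a μ) (b μ)) :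
    (∫⁻ y in univ.pi fun μ => Icc (a μ) (b μ), ENNReal.ofReal |f y|) /
        volume (univ.pi fun μ => Icc (a μ) (b μ)) ≤ strongMaximal d f x :=
  le_iSup_of_le a <| le_iSup_of_le b <| le_iSup_of_le hab <| le_iSup_of_le hx le_rfl

section Grid

variable {d : ℕ} {n : Fin d → ℕ} {t : Fin d → ℕ → ℝ}

lemma exists_mem_gridCell (hn : ∀ μ, 0 < n μ) (h0 : ∀ μ, t μ 0 = 0) (h1 : ∀ μ, t μ (n μ) = 1)
    {x : Fin d → ℝ} (hx : x ∈ unitCube d) : ∃ i, (∀ μ, i μ < n μ) ∧ x ∈ gridCell d t i := by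
  have hcell μ : ∃ k < n μ, x μ ∈ Icc (t μ k) (t μ (k + 1)) :=
    exists_lt_mem_Icc_of_mem_Icc (t μ) (hn μ) (by rw [h0, h1]; exact hx μ (mem_univ μ))
  choose i hi hxi using hcell
  exact ⟨i, hi, fun μ _ => hxi μ⟩

lemma unitCube_subset_biUnion_gridCell (hn : ∀ μ, 0 < n μ) (h0 : ∀ μ, t μ 0 = 0)
    (h1 : ∀ μ, t μ (n μ) = 1) :
    unitCube d ⊆ ⋃ j ∈ Fintype.piFinset fun μ => Finset.range (n μ), gridCell d t j := by
  intro y hy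
  obtain ⟨j, hj, hyj⟩ := exists_mem_gridCell hn h0 h1 hy
  exact mem_biUnion (Fintype.mem_piFinset.2 fun μ => Finset.mem_range.2 (hj μ)) hyj

lemma measurableSet_gridCell (i : Fin d → ℕ) : MeasurableSet (gridCell d t i) :=
  .univ_pi fun _ => measurableSet_Icc

lemma gridEnvelope_comm (i j : Fin d → ℕ) : gridEnvelope d t i j = gridEnvelope d t j i := by
  simp only [gridEnvelope, min_comm, max_comm]

lemma gridCell_subset_gridEnvelope (hmono : ∀ μ, Monotone (t μ)) (i j : Fin d → ℕ) :
    gridCell d t i ⊆ gridEnvelope d t i j := fun _ hy μ _ =>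
  ⟨(hmono μ (min_le_left _ _)).trans (hy μ (mem_univ μ)).1,
    (hy μ (mem_univ μ)).2.trans (hmono μ (Nat.succ_le_succ (le_max_left _ _)))⟩

lemma volume_gridEnvelope_ne_top (i j : Fin d → ℕ) : volume (gridEnvelope d t i j) ≠ ∞ := by
  rw [gridEnvelope, pi_univ_Icc, Real.volume_Icc_pi]
  exact ENNReal.prod_ne_top fun μ _ => ofReal_ne_top

/-- A null envelope has average `0 / 0 = 0`; any other is one of the rectangles in
`strongMaximal`. -/
lemma setLIntegral_div_volume_gridEnvelope_le_strongMaximal (hmono : ∀ μ, Monotone (t μ))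
    (h0 : ∀ μ, t μ 0 = 0) (h1 : ∀ μ, t μ (n μ) = 1) {i j : Fin d → ℕ} (hi : ∀ μ, i μ < n μ)
    (hj : ∀ μ, j μ < n μ) (f : (Fin d → ℝ) → ℝ) {x : Fin d → ℝ} (hx : x ∈ gridCell d t i) :
    (∫⁻ y in gridEnvelope d t i j, ENNReal.ofReal |f y|) / volume (gridEnvelope d t i j) ≤
      strongMaximal d f x := by
  rcases eq_or_ne (volume (gridEnvelope d t i j)) 0 with hvol | hvol
  · simp [setLIntegral_measure_zero _ _ hvol, hvol]
  refine setLIntegral_div_volume_le_strongMaximal f (fun μ => ⟨?_, ?_, ?_⟩)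
    (gridCell_subset_gridEnvelope hmono i j hx)
  · exact h0 μ ▸ hmono μ (Nat.zero_le _)
  · by_contra hle
    refine hvol ?_
    rw [gridEnvelope, pi_univ_Icc, Real.volume_Icc_pi]
    exact Finset.prod_eq_zero (Finset.mem_univ μ) (ENNReal.ofReal_eq_zero.2 (by linarith))
  · exact h1 μ ▸ hmono μ (max_lt (hi μ) (hj μ))

end Grid

theorem kernel_decay_pointwise_bound_general (d : ℕ)
    (n : Fin d → ℕ) (hn : ∀ μ, 0 < n μ) (t : Fin d → ℕ → ℝ)
    (hmono : ∀ μ, Monotone (t μ)) (h0 : ∀ μ, t μ 0 = 0) (h1 : ∀ μ, t μ (n μ) = 1)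
    (K : (Fin d → ℝ) → (Fin d → ℝ) → ℝ)
    (C γ : ℝ) (hC : 0 < C) (hγ0 : 0 < γ) (hγ1 : γ < 1)
    (hbound : ∀ i j : Fin d → ℕ, (∀ μ, i μ < n μ) → (∀ μ, j μ < n μ) →
      ∀ x ∈ gridCell d t i, ∀ y ∈ gridCell d t j,
        |K x y| ≤ C * γ ^ (∑ μ, ((i μ : ℤ) - j μ).natAbs) /
          (volume (gridEnvelope d t i j)).toReal) :
    ∀ f : (Fin d → ℝ) → ℝ, IntegrableOn f (unitCube d) →
      ∀ x ∈ unitCube d,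
        ENNReal.ofReal |∫ y in unitCube d, K x y * f y| ≤
          ENNReal.ofReal (C * ∑' j : Fin d → ℤ, γ ^ (∑ μ, (j μ).natAbs)) *
            strongMaximal d f x := by
  intro f _ x hx
  obtain ⟨i, hi, hxi⟩ := exists_mem_gridCell hn h0 h1 hx
  set F := Fintype.piFinset fun μ => Finset.range (n μ)
  set w : (Fin d → ℕ) → ℝ := fun j => γ ^ (∑ μ, ((i μ : ℤ) - j μ).natAbs)
  have hcell : ∀ j ∈ F, ∫⁻ y in gridCell d t j, ENNReal.ofReal (|K x y| * |f y|) ≤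
      ENNReal.ofReal (C * w j) * strongMaximal d f x := fun j hjF => by
    have hj μ : j μ < n μ := Finset.mem_range.1 (Fintype.mem_piFinset.1 hjF μ)
    refine (setLIntegral_mul_le_mul_average (measurableSet_gridCell j)
      (gridEnvelope_comm (t := t) i j ▸ gridCell_subset_gridEnvelope hmono j i)
      (volume_gridEnvelope_ne_top i j) fun y hy => hbound i j hi hj x hxi y hy).trans ?_
    gcongr
    exact setLIntegral_div_volume_gridEnvelope_le_strongMaximal hmono h0 h1 hi hj f hxi
  calc ENNReal.ofReal |∫ y in unitCube d, K x y * f y|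
      ≤ ∫⁻ y in unitCube d, ENNReal.ofReal (|K x y| * |f y|) :=
        ofReal_abs_integral_mul_le_lintegral _ _
    _ ≤ ∑ j ∈ F, ∫⁻ y in gridCell d t j, ENNReal.ofReal (|K x y| * |f y|) :=
        (lintegral_mono_set (unitCube_subset_biUnion_gridCell hn h0 h1)).trans
          (lintegral_biUnion_finset_le _ _ _)
    _ ≤ ∑ j ∈ F, ENNReal.ofReal (C * w j) * strongMaximal d f x := Finset.sum_le_sum hcell
    _ = ENNReal.ofReal (C * ∑ j ∈ F, w j) * strongMaximal d f x := by
        rw [← Finset.sum_mul, Finset.mul_sum,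
          ENNReal.ofReal_sum_of_nonneg fun j _ => by positivity]
    _ ≤ ENNReal.ofReal (C * ∑' j : Fin d → ℤ, γ ^ (∑ μ, (j μ).natAbs)) *
          strongMaximal d f x := by
        gcongr
        exact sum_pow_sum_natAbs_sub_le_tsum hγ0.le hγ1 i F

/-- If a kernel `K` on `[0,1]^d × [0,1]^d` satisfies the geometric-decay bound
`|K(x,y)| ≤ C γ^{|i-j|₁} / |I_{ij}|` for `x ∈ I_i`, `y ∈ I_j` with respect to a tensor
grid partition of the unit cube, then the associated integral operator is pointwise
dominated by `C (∑_{j ∈ ℤ^d} γ^{|j|₁}) · M_S f`. -/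
theorem kernel_decay_pointwise_bound (d : ℕ) (hd : 0 < d)
    (n : Fin d → ℕ) (hn : ∀ μ, 0 < n μ) (t : Fin d → ℕ → ℝ)
    (hmono : ∀ μ, Monotone (t μ)) (h0 : ∀ μ, t μ 0 = 0) (h1 : ∀ μ, t μ (n μ) = 1)
    (K : (Fin d → ℝ) → (Fin d → ℝ) → ℝ) (hK : Measurable (Function.uncurry K))
    (C γ : ℝ) (hC : 0 < C) (hγ0 : 0 < γ) (hγ1 : γ < 1)
    (hbound : ∀ i j : Fin d → ℕ, (∀ μ, i μ < n μ) → (∀ μ, j μ < n μ) →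
      ∀ x ∈ gridCell d t i, ∀ y ∈ gridCell d t j,
        |K x y| ≤ C * γ ^ (∑ μ, ((i μ : ℤ) - j μ).natAbs) /
          (volume (gridEnvelope d t i j)).toReal) :
    ∀ f : (Fin d → ℝ) → ℝ, IntegrableOn f (unitCube d) →
      ∀ x ∈ unitCube d,
        ENNReal.ofReal |∫ y in unitCube d, K x y * f y| ≤
          ENNReal.ofReal (C * ∑' j : Fin d → ℤ, γ ^ (∑ μ, (j μ).natAbs)) *
            strongMaximal d f x :=
  kernel_decay_pointwise_bound_general d n hn t hmono h0 h1 K C γ hC hγ0 hγ1 hbound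
end
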